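/- Let x ∈ L²(ℝ,ℂ) with Fourier transform X satisfying ∫ e^{r|ω|}|X(iω)|² dω < ∞ for some r > 0. Let h be a C^∞ function vanishing outside [−θ, T] (θ ≥ 0, T > 0), set q(t) = h(t−T) and Q = Fourier transform of q, and let ψ_d be polynomials with ∫ e^{−r|ω|}|ψ_d(iω) − e^{iTω}|² dω → 0. Define Ĥ_d(iω) = e^{−iTω} ψ_d(iω) H(iω), where H is the Fourier transform of h, and ŷ_d = F^{-1}(Ĥ_d(i·) X(i·)), y = F^{-1}(H(i·) X(i·)). Then sup_{t∈ℝ} |ŷ_d(t) − y(t)| → 0 as d → ∞. -/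

import Mathlib

open MeasureTheory Filter Set

lemma aux_even_integrable {f : ℝ → ℝ} (hf : ∀ x, f (-x) = f x)
    (h : IntegrableOn f (Ici 0)) : Integrable f := by
  have hI : Integrable ((Ici (0:ℝ)).indicator f) :=
    (integrable_indicator_iff measurableSet_Ici).2 h
  have hneg : Integrable (fun x => (Ici (0:ℝ)).indicator f (-x)) := by
    have := (integrable_comp_mul_left_iff ((Ici (0:ℝ)).indicator f)
      (by norm_num : (-1:ℝ) ≠ 0)).2 hI
    simpa [neg_one_mul] using this
  have heq : (fun x => (Ici (0:ℝ)).indicator f (-x)) = (Iic (0:ℝ)).indicator f := by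
    funext x
    by_cases hx : x ≤ 0 <;>
      simp [Set.indicator, hx, hf, neg_nonneg, not_le.1]
  rw [heq] at hneg
  have h2 : IntegrableOn f (Iic 0) := (integrable_indicator_iff measurableSet_Iic).1 hneg
  have := h2.union h
  rwa [Set.Iic_union_Ici, integrableOn_univ] at this

lemma aux_pow_exp {b : ℝ} (hb : 0 < b) (n : ℕ) :
    Integrable (fun x : ℝ => |x| ^ n * Real.exp (-b * |x|)) := by
  apply aux_even_integrable (by intro x; simp)
  have h0 := integrableOn_rpow_mul_exp_neg_mul_rpow (p := 1) (s := n) (b := b)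
    (by exact_mod_cast neg_one_lt_zero.trans_le (Nat.cast_nonneg n)) zero_lt_one hb
  rw [← integrableOn_Ici_iff_integrableOn_Ioi] at h0
  apply h0.congr_fun ?_ measurableSet_Ici
  intro x hx
  simp only [mem_Ici] at hx
  simp only [abs_of_nonneg hx, Real.rpow_natCast, Real.rpow_one, pow_one]

lemma aux_exp_abs {b : ℝ} (hb : 0 < b) :
    Integrable (fun x : ℝ => Real.exp (-b * |x|)) := by
  simpa using aux_pow_exp hb 0

lemma aux_one_add_pow_exp {b : ℝ} (hb : 0 < b) (m : ℕ) :
    Integrable (fun x : ℝ => (1 + |x|) ^ m * Real.exp (-b * |x|)) := by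
  have heq : (fun x : ℝ => (1 + |x|) ^ m * Real.exp (-b * |x|)) =
      fun x => ∑ k ∈ Finset.range (m + 1),
        (m.choose k : ℝ) * (|x| ^ k * Real.exp (-b * |x|)) := by
    funext x
    rw [add_comm (1:ℝ), add_pow, Finset.sum_mul]
    exact Finset.sum_congr rfl fun k _ => by ring
  rw [heq]
  exact integrable_finset_sum _ fun k _ => (aux_pow_exp hb k).const_mul _

lemma aux_poly_bound (P : Polynomial ℂ) (z : ℂ) :
    ‖P.eval z‖ ≤ (∑ k ∈ Finset.range (P.natDegree + 1), ‖P.coeff k‖) *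
      (1 + ‖z‖) ^ P.natDegree := by
  rw [Polynomial.eval_eq_sum_range, Finset.sum_mul]
  refine (norm_sum_le _ _).trans (Finset.sum_le_sum fun k hk => ?_)
  rw [norm_mul, norm_pow]
  apply mul_le_mul_of_nonneg_left _ (norm_nonneg _)
  calc ‖z‖ ^ k ≤ (1 + ‖z‖) ^ k := by
        apply pow_le_pow_left₀ (norm_nonneg z)
        linarith [norm_nonneg z]
    _ ≤ (1 + ‖z‖) ^ P.natDegree := by
        apply pow_le_pow_right₀ (by linarith [norm_nonneg z])
        have := Finset.mem_range.1 hk; omega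

lemma aux_poly_exp_integrable {b : ℝ} (hb : 0 < b) (P : Polynomial ℂ) :
    Integrable (fun ω : ℝ => Real.exp (-b * |ω|) * ‖P.eval (Complex.I * ω)‖ ^ 2) := by
  set M := ∑ k ∈ Finset.range (P.natDegree + 1), ‖P.coeff k‖ with hM
  have hcont : Continuous fun ω : ℝ =>
      Real.exp (-b * |ω|) * ‖P.eval (Complex.I * ω)‖ ^ 2 := by fun_prop
  apply Integrable.mono'
    ((aux_one_add_pow_exp hb (2 * P.natDegree)).const_mul (M ^ 2))
    hcont.aestronglyMeasurable
  filter_upwards with ω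
  have h1 := aux_poly_bound P (Complex.I * ω)
  have h2 : ‖Complex.I * (ω:ℂ)‖ = |ω| := by
    simp [Complex.norm_real]
  rw [h2] at h1
  have h3 : ‖P.eval (Complex.I * ω)‖ ^ 2 ≤ (M * (1 + |ω|) ^ P.natDegree) ^ 2 :=
    pow_le_pow_left₀ (norm_nonneg _) h1 2
  rw [Real.norm_eq_abs, abs_of_nonneg (by positivity)]
  calc Real.exp (-b * |ω|) * ‖P.eval (Complex.I * ω)‖ ^ 2
      ≤ Real.exp (-b * |ω|) * (M * (1 + |ω|) ^ P.natDegree) ^ 2 :=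
        mul_le_mul_of_nonneg_left h3 (Real.exp_pos _).le
    _ = M ^ 2 * ((1 + |ω|) ^ (2 * P.natDegree) * Real.exp (-b * |ω|)) := by
        rw [mul_pow, ← pow_mul]; ring

lemma aux_young {c : ℝ} (hc : 0 < c) (a b : ℝ) : a * b ≤ (c * a ^ 2 + b ^ 2 / c) / 2 := by
  rw [← sub_nonneg]
  have h1 : (c * a ^ 2 + b ^ 2 / c) / 2 - a * b = (c * a - b) ^ 2 / (2 * c) := by
    field_simp; ring
  rw [h1]; positivity

lemma aux_split {c : ℝ} (hc : 0 < c) (s A B : ℝ) :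
    A * B ≤ (c * (Real.exp (-s) * A ^ 2) + Real.exp s * B ^ 2 / c) / 2 := by
  have h := aux_young hc (Real.exp (-s / 2) * A) (Real.exp (s / 2) * B)
  have e1 : Real.exp (-s / 2) ^ 2 = Real.exp (-s) := by
    rw [sq, ← Real.exp_add]; ring_nf
  have e2 : Real.exp (s / 2) ^ 2 = Real.exp s := by
    rw [sq, ← Real.exp_add]; ring_nf
  have e3 : Real.exp (-s / 2) * A * (Real.exp (s / 2) * B) = A * B := by
    rw [mul_mul_mul_comm, ← Real.exp_add]
    ring_nf
    simp
  calc A * B = Real.exp (-s / 2) * A * (Real.exp (s / 2) * B) := e3.symm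
    _ ≤ (c * (Real.exp (-s / 2) * A) ^ 2 + (Real.exp (s / 2) * B) ^ 2 / c) / 2 := h
    _ = (c * (Real.exp (-s) * A ^ 2) + Real.exp s * B ^ 2 / c) / 2 := by
        rw [mul_pow, mul_pow, e1, e2]

lemma aux_shift (z : ℂ) (a b : ℝ) :
    ‖Complex.exp (-(Complex.I * a * b)) * z - 1‖ = ‖z - Complex.exp (Complex.I * a * b)‖ := by
  have h : Complex.exp (-(Complex.I * a * b)) * z - 1
      = Complex.exp (-(Complex.I * a * b)) * (z - Complex.exp (Complex.I * a * b)) := by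
    rw [mul_sub, ← Complex.exp_add]
    simp
  rw [h, norm_mul]
  simp [Complex.norm_exp]

set_option maxHeartbeats 1000000 in
/-- Main predictability theorem in the frequency domain: the predicted process
`ŷ_d = F⁻¹(Ĥ_d(i·) X(i·))` with `Ĥ_d(iω) = e^{-iTω} ψ_d(iω) H(iω)` converges
uniformly to `y = F⁻¹(H(i·) X(i·))`. -/
theorem predictability_main
    (r θ T : ℝ) (hr : 0 < r) (hθ : 0 ≤ θ) (hT : 0 < T)
    (h : ℝ → ℝ) (hsm : ContDiff ℝ (⊤ : ℕ∞) h)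
    (hsupp : ∀ t : ℝ, t ∉ Set.Icc (-θ) T → h t = 0)
    (H : ℝ → ℂ)
    (hH : ∀ ω : ℝ, H ω = ∫ t : ℝ, Complex.exp (-(Complex.I * ω * t)) * (h t : ℂ))
    (X : ℝ → ℂ) (hXm : Measurable X)
    (hXw : Integrable (fun ω : ℝ => Real.exp (r * |ω|) * ‖X ω‖ ^ 2))
    (ψ : ℕ → Polynomial ℂ)
    (hψ : Tendsto (fun d : ℕ => ∫ ω : ℝ,
        Real.exp (-r * |ω|) *
          ‖(ψ d).eval (Complex.I * ω) - Complex.exp (Complex.I * T * ω)‖ ^ 2)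
        atTop (nhds 0))
    (y : ℝ → ℂ) (yhat : ℕ → ℝ → ℂ)
    (hy : ∀ t : ℝ, y t = (1 / (2 * Real.pi)) *
        ∫ ω : ℝ, Complex.exp (Complex.I * ω * t) * (H ω * X ω))
    (hyhat : ∀ d : ℕ, ∀ t : ℝ, yhat d t = (1 / (2 * Real.pi)) *
        ∫ ω : ℝ, Complex.exp (Complex.I * ω * t) *
          (Complex.exp (-(Complex.I * T * ω)) * (ψ d).eval (Complex.I * ω) *
            H ω * X ω)) :
    ∀ ε : ℝ, 0 < ε → ∃ D : ℕ, ∀ d : ℕ, D ≤ d →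
      ∀ t : ℝ, ‖yhat d t - y t‖ ≤ ε := by
  intro ε hε
  have hπ : (0:ℝ) < Real.pi := Real.pi_pos
  have hhc : Continuous h := hsm.continuous
  have hhint : Integrable h :=
    hhc.integrable_of_hasCompactSupport (HasCompactSupport.intro isCompact_Icc hsupp)
  obtain ⟨C, hCdef⟩ : ∃ C : ℝ, C = ∫ t : ℝ, |h t| := ⟨_, rfl⟩
  have hC0 : 0 ≤ C := hCdef ▸ integral_nonneg fun t => abs_nonneg _
  have hHb : ∀ ω : ℝ, ‖H ω‖ ≤ C := by
    intro ω; rw [hH ω]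
    refine (norm_integral_le_integral_norm _).trans (le_of_eq ?_)
    have heq : (fun t : ℝ => ‖Complex.exp (-(Complex.I * ω * t)) * (h t : ℂ)‖)
        = fun t : ℝ => |h t| := by
      funext t
      simp [Complex.norm_exp, Complex.norm_real]
    rw [heq, hCdef]
  have hHsm : AEStronglyMeasurable H (volume : Measure ℝ) := by
    have hsm2 : StronglyMeasurable fun ω : ℝ =>
        ∫ t : ℝ, Complex.exp (-(Complex.I * ω * t)) * (h t : ℂ) := by
      apply MeasureTheory.StronglyMeasurable.integral_prod_right'
        (f := fun p : ℝ × ℝ => Complex.exp (-(Complex.I * p.1 * p.2)) * (h p.2 : ℂ))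
      exact Continuous.stronglyMeasurable (by fun_prop)
    have hfun : H = fun ω : ℝ =>
        ∫ t : ℝ, Complex.exp (-(Complex.I * ω * t)) * (h t : ℂ) := funext hH
    rw [hfun]; exact hsm2.aestronglyMeasurable
  have hXint : Integrable X := by
    refine Integrable.mono' (((aux_exp_abs hr).add hXw).div_const 2)
      hXm.aestronglyMeasurable ?_
    filter_upwards with ω
    have := aux_split (c := 1) one_pos (r * |ω|) 1 ‖X ω‖
    simpa [neg_mul] using this
  have hg1int : ∀ d, Integrable (fun ω : ℝ => Real.exp (-r * |ω|) *
      ‖(ψ d).eval (Complex.I * ω) - Complex.exp (Complex.I * T * ω)‖ ^ 2) := by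
    intro d
    have hcont : Continuous (fun ω : ℝ => Real.exp (-r * |ω|) *
        ‖(ψ d).eval (Complex.I * ω) - Complex.exp (Complex.I * T * ω)‖ ^ 2) := by fun_prop
    apply Integrable.mono'
      (g := fun ω : ℝ => 2 * (Real.exp (-r * |ω|) * ‖(ψ d).eval (Complex.I * ω)‖ ^ 2)
        + 2 * Real.exp (-r * |ω|))
      (((aux_poly_exp_integrable hr (ψ d)).const_mul 2).add ((aux_exp_abs hr).const_mul 2))
      hcont.aestronglyMeasurable
    filter_upwards with ω
    rw [Real.norm_eq_abs, abs_of_nonneg (by positivity)]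
    have hn : ‖(ψ d).eval (Complex.I * ω) - Complex.exp (Complex.I * T * ω)‖
        ≤ ‖(ψ d).eval (Complex.I * ω)‖ + 1 := by
      refine (norm_sub_le _ _).trans ?_
      simp [Complex.norm_exp]
    have hq : ‖(ψ d).eval (Complex.I * ω) - Complex.exp (Complex.I * T * ω)‖ ^ 2
        ≤ 2 * ‖(ψ d).eval (Complex.I * ω)‖ ^ 2 + 2 := by
      nlinarith [norm_nonneg ((ψ d).eval (Complex.I * ω) - Complex.exp (Complex.I * T * ω)),
        norm_nonneg ((ψ d).eval (Complex.I * ω)),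
        sq_nonneg (‖(ψ d).eval (Complex.I * ω)‖ - 1)]
    calc Real.exp (-r * |ω|) *
        ‖(ψ d).eval (Complex.I * ω) - Complex.exp (Complex.I * T * ω)‖ ^ 2
        ≤ Real.exp (-r * |ω|) * (2 * ‖(ψ d).eval (Complex.I * ω)‖ ^ 2 + 2) :=
          mul_le_mul_of_nonneg_left hq (Real.exp_pos _).le
      _ = 2 * (Real.exp (-r * |ω|) * ‖(ψ d).eval (Complex.I * ω)‖ ^ 2)
          + 2 * Real.exp (-r * |ω|) := by ring
  have hunit1 : ∀ ω t : ℝ, ‖Complex.exp (Complex.I * ω * t)‖ = 1 := fun ω t => by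
    simp [Complex.norm_exp]
  have hunit2 : ∀ ω : ℝ, ‖Complex.exp (-(Complex.I * T * ω))‖ = 1 := fun ω => by
    simp [Complex.norm_exp]
  have hf2int : ∀ t : ℝ, Integrable (fun ω : ℝ =>
      Complex.exp (Complex.I * ω * t) * (H ω * X ω)) := by
    intro t
    refine Integrable.mono' (hXint.norm.const_mul C) ?_ ?_
    · exact (Continuous.aestronglyMeasurable (by fun_prop)).mul
        (hHsm.mul hXm.aestronglyMeasurable)
    · filter_upwards with ω
      rw [norm_mul, hunit1 ω t, one_mul, norm_mul]
      exact mul_le_mul_of_nonneg_right (hHb ω) (norm_nonneg _)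
  have hf1int : ∀ d, ∀ t : ℝ, Integrable (fun ω : ℝ =>
      Complex.exp (Complex.I * ω * t) *
        (Complex.exp (-(Complex.I * T * ω)) * (ψ d).eval (Complex.I * ω) *
          H ω * X ω)) := by
    intro d t
    refine Integrable.mono'
      (g := fun ω : ℝ => C * ((Real.exp (-r * |ω|) * ‖(ψ d).eval (Complex.I * ω)‖ ^ 2
        + Real.exp (r * |ω|) * ‖X ω‖ ^ 2) / 2))
      ((((aux_poly_exp_integrable hr (ψ d)).add hXw).div_const 2).const_mul C) ?_ ?_
    · refine (Continuous.aestronglyMeasurable (by fun_prop)).mul ?_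
      refine AEStronglyMeasurable.mul ?_ hXm.aestronglyMeasurable
      refine AEStronglyMeasurable.mul ?_ hHsm
      exact Continuous.aestronglyMeasurable (by fun_prop)
    · filter_upwards with ω
      rw [norm_mul, hunit1 ω t, one_mul, norm_mul, norm_mul, norm_mul, hunit2 ω, one_mul]
      have hs := aux_split (c := 1) one_pos (r * |ω|) ‖(ψ d).eval (Complex.I * ω)‖ ‖X ω‖
      have hs' : ‖(ψ d).eval (Complex.I * ω)‖ * ‖X ω‖
          ≤ (Real.exp (-r * |ω|) * ‖(ψ d).eval (Complex.I * ω)‖ ^ 2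
            + Real.exp (r * |ω|) * ‖X ω‖ ^ 2) / 2 := by
        simpa [neg_mul] using hs
      calc ‖(ψ d).eval (Complex.I * ω)‖ * ‖H ω‖ * ‖X ω‖
          ≤ ‖(ψ d).eval (Complex.I * ω)‖ * C * ‖X ω‖ := by
            apply mul_le_mul_of_nonneg_right _ (norm_nonneg _)
            exact mul_le_mul_of_nonneg_left (hHb ω) (norm_nonneg _)
        _ = C * (‖(ψ d).eval (Complex.I * ω)‖ * ‖X ω‖) := by ring
        _ ≤ C * ((Real.exp (-r * |ω|) * ‖(ψ d).eval (Complex.I * ω)‖ ^ 2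
            + Real.exp (r * |ω|) * ‖X ω‖ ^ 2) / 2) :=
          mul_le_mul_of_nonneg_left hs' hC0
  -- constants
  obtain ⟨B, hBdef⟩ : ∃ B : ℝ, B = ∫ ω : ℝ, Real.exp (r * |ω|) * ‖X ω‖ ^ 2 := ⟨_, rfl⟩
  have hB0 : 0 ≤ B := hBdef ▸ integral_nonneg fun ω => by positivity
  obtain ⟨c, hcdef⟩ : ∃ c : ℝ, c = C * B / (2 * Real.pi * ε) + 1 := ⟨_, rfl⟩
  have hc : 0 < c := by rw [hcdef]; positivity
  obtain ⟨δ, hδdef⟩ : ∃ δ : ℝ, δ = Real.pi * ε / (C * c + 1) := ⟨_, rfl⟩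
  have hδ : 0 < δ := by rw [hδdef]; positivity
  obtain ⟨D, hD⟩ := Filter.eventually_atTop.1 (hψ.eventually (eventually_lt_nhds hδ))
  refine ⟨D, fun d hd t => ?_⟩
  have hAd := hD d hd
  obtain ⟨A, hAdef⟩ : ∃ A : ℝ, A = ∫ ω : ℝ, Real.exp (-r * |ω|) *
    ‖(ψ d).eval (Complex.I * ω) - Complex.exp (Complex.I * T * ω)‖ ^ 2 := ⟨_, rfl⟩
  rw [← hAdef] at hAd
  have hA0 : 0 ≤ A := hAdef ▸ integral_nonneg fun ω => by positivity
  rw [hyhat d t, hy t, ← mul_sub, ← integral_sub (hf1int d t) (hf2int t), norm_mul]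
  have hπn : ‖(1 / (2 * (Real.pi : ℂ)))‖ = 1 / (2 * Real.pi) := by
    rw [norm_div, norm_one, norm_mul]
    simp [Complex.norm_real, abs_of_nonneg hπ.le]
  rw [hπn]
  have key : ‖∫ ω : ℝ, (Complex.exp (Complex.I * ω * t) *
        (Complex.exp (-(Complex.I * T * ω)) * (ψ d).eval (Complex.I * ω) * H ω * X ω)
      - Complex.exp (Complex.I * ω * t) * (H ω * X ω))‖
      ≤ C * ((c * A + B / c) / 2) := by
    refine (norm_integral_le_integral_norm _).trans ?_
    have hRint : Integrable (fun ω : ℝ => C * ((c * (Real.exp (-r * |ω|) *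
        ‖(ψ d).eval (Complex.I * ω) - Complex.exp (Complex.I * T * ω)‖ ^ 2)
        + Real.exp (r * |ω|) * ‖X ω‖ ^ 2 / c) / 2)) :=
      ((((hg1int d).const_mul c).add (hXw.div_const c)).div_const 2).const_mul C
    refine (integral_mono_of_nonneg (.of_forall fun ω => norm_nonneg _) hRint
      (.of_forall fun ω => ?_)).trans_eq ?_
    · beta_reduce
      have hfactor : Complex.exp (Complex.I * ω * t) *
          (Complex.exp (-(Complex.I * T * ω)) * (ψ d).eval (Complex.I * ω) * H ω * X ω)
          - Complex.exp (Complex.I * ω * t) * (H ω * X ω)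
          = Complex.exp (Complex.I * ω * t) *
            ((Complex.exp (-(Complex.I * T * ω)) * (ψ d).eval (Complex.I * ω) - 1)
              * (H ω * X ω)) := by ring
      rw [hfactor, norm_mul, hunit1 ω t, one_mul, norm_mul, aux_shift, norm_mul]
      have hs := aux_split hc (r * |ω|)
        ‖(ψ d).eval (Complex.I * ω) - Complex.exp (Complex.I * T * ω)‖ ‖X ω‖
      have hs' : ‖(ψ d).eval (Complex.I * ω) - Complex.exp (Complex.I * T * ω)‖ * ‖X ω‖
          ≤ (c * (Real.exp (-r * |ω|) *
            ‖(ψ d).eval (Complex.I * ω) - Complex.exp (Complex.I * T * ω)‖ ^ 2)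
            + Real.exp (r * |ω|) * ‖X ω‖ ^ 2 / c) / 2 := by
        simpa [neg_mul] using hs
      calc ‖(ψ d).eval (Complex.I * ω) - Complex.exp (Complex.I * T * ω)‖
            * (‖H ω‖ * ‖X ω‖)
          ≤ ‖(ψ d).eval (Complex.I * ω) - Complex.exp (Complex.I * T * ω)‖
            * (C * ‖X ω‖) := by
            apply mul_le_mul_of_nonneg_left _ (norm_nonneg _)
            exact mul_le_mul_of_nonneg_right (hHb ω) (norm_nonneg _)
        _ = C * (‖(ψ d).eval (Complex.I * ω) - Complex.exp (Complex.I * T * ω)‖ * ‖X ω‖) := by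
            ring
        _ ≤ C * ((c * (Real.exp (-r * |ω|) *
            ‖(ψ d).eval (Complex.I * ω) - Complex.exp (Complex.I * T * ω)‖ ^ 2)
            + Real.exp (r * |ω|) * ‖X ω‖ ^ 2 / c) / 2) :=
          mul_le_mul_of_nonneg_left hs' hC0
    · rw [integral_const_mul, integral_div, integral_add ((hg1int d).const_mul c)
        (hXw.div_const c), integral_const_mul, integral_div, ← hAdef, ← hBdef]
  refine (mul_le_mul_of_nonneg_left key (by positivity : (0:ℝ) ≤ 1 / (2 * Real.pi))).trans ?_
  -- final numeric step
  have hABle : A ≤ δ := hAd.le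
  have h1 : C * c * A ≤ Real.pi * ε := by
    have h11 : C * c * A ≤ C * c * δ := by
      apply mul_le_mul_of_nonneg_left hABle (by positivity)
    refine h11.trans ?_
    rw [hδdef]
    have : C * c / (C * c + 1) ≤ 1 := by
      rw [div_le_one (by positivity)]; linarith
    calc C * c * (Real.pi * ε / (C * c + 1))
        = (C * c / (C * c + 1)) * (Real.pi * ε) := by ring
      _ ≤ 1 * (Real.pi * ε) := by
          apply mul_le_mul_of_nonneg_right this (by positivity)
      _ = Real.pi * ε := one_mul _
  have h2 : C * B / c ≤ 2 * Real.pi * ε := by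
    have hCB : C * B = 2 * Real.pi * ε * (c - 1) := by
      rw [hcdef]; field_simp; ring
    rw [hCB]
    rw [div_le_iff₀ hc]
    nlinarith [hc]
  have hfin : C * ((c * A + B / c) / 2) ≤ (3 / 2) * (Real.pi * ε) := by
    have e1 : C * ((c * A + B / c) / 2) = (C * c * A) / 2 + (C * B / c) / 2 := by
      field_simp
    rw [e1]; linarith
  calc 1 / (2 * Real.pi) * (C * ((c * A + B / c) / 2))
      ≤ 1 / (2 * Real.pi) * ((3 / 2) * (Real.pi * ε)) := by
        apply mul_le_mul_of_nonneg_left hfin (by positivity)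
    _ = (3 / 4) * ε := by field_simp; ring
    _ ≤ ε := by linarith
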